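/- arXiv:2603.25294 — 2 statements merged into one kernel-verified Lean document; each statement's English description precedes it below -/
import Mathlib

section
/- The bicommutant identities {L_a : a ∈ A}″ = {L_ξ : ξ ∈ L^∞(τ)} = {R_ξ : ξ ∈ L^∞(τ)}′ and {R_a : a ∈ A}″ = {R_ξ : ξ ∈ L^∞(τ)} = {L_ξ : ξ ∈ L^∞(τ)}′ hold in B(L²(τ)). In particular, {L_ξ : ξ ∈ L^∞(τ)} and {R_ξ : ξ ∈ L^∞(τ)} are von Neumann algebras (weakly closed unital *-subalgebras equal to their bicommutants). -/
open scoped InnerProductSpace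

/-- The set of numbers `‖ξ·a‖` over `L²`-contractions `a ∈ A`, whose supremum is the
`L^∞`-norm of `ξ ∈ L²(τ)`.  Here `Rmul a ξ = ξ·a`. -/
def infNormSet {A H : Type*} [NormedRing A] [StarRing A] [NormedAlgebra ℂ A]
    [NormedAddCommGroup H] [InnerProductSpace ℂ H]
    (τ : A →ₗ[ℂ] ℂ) (Rmul : A → H →L[ℂ] H) (ξ : H) : Set ℝ :=
  {r : ℝ | ∃ a : A, (τ (star a * a)).re ≤ 1 ∧ r = ‖Rmul a ξ‖}

/-- `ξ ∈ L^∞(τ)`. -/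
def MemLinfty {A H : Type*} [NormedRing A] [StarRing A] [NormedAlgebra ℂ A]
    [NormedAddCommGroup H] [InnerProductSpace ℂ H]
    (τ : A →ₗ[ℂ] ℂ) (Rmul : A → H →L[ℂ] H) (ξ : H) : Prop :=
  BddAbove (infNormSet τ Rmul ξ)

/-!
An operator `T` commuting with every `R_a` satisfies `T a = ξ·a` for `ξ = T 1`, and one commuting
with every `L_a` satisfies `S a = a·η` for `η = S 1`; boundedness of `S` gives
`‖η·a‖ ≤ ‖S‖ ‖a‖₂` by duality, since `⟪b, η·a⟫ = ⟪a⋆, S b⋆⟫`. Hence `{R_a}′ = {L_ξ}` and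
`{L_a}′ = {R_η}`, and the bicommutant identities reduce to `{R_a}′` and `{L_a}′` commuting.
For this, extend `a ↦ a⋆` (isometric by the trace property) to a continuous `J` on `L²(τ)`; then
`⟪d, T S a⟫ = ⟪d·J(a·η), ξ⟫` and `⟪d, S T a⟫ = ⟪J(ξ·a)·d, η⟫`, which agree since both sides are
jointly continuous in `(ξ, η)` and for `ξ = c`, `η = b` they are `τ(ab d⋆c) = τ(d⋆c ab)`.
-/

open Set

theorem DenseRange.exists_continuous_extend_of_dist_eq {Z X Y : Type*} [PseudoMetricSpace X]
    [MetricSpace Y] [CompleteSpace Y] {i : Z → X} (hi : DenseRange i) {f : Z → Y}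
    (hf : ∀ a b, dist (f a) (f b) = dist (i a) (i b)) :
    ∃ g : X → Y, Continuous g ∧ ∀ a, g (i a) = f a := by
  let f₀ : range i → Y := fun x => f x.2.choose
  have hf₀ : ∀ a, f₀ ⟨i a, mem_range_self a⟩ = f a := fun a =>
    dist_eq_zero.1 <| (hf _ a).trans <| by rw [(mem_range_self (f := i) a).choose_spec, dist_self]
  have hiso : Isometry f₀ := Isometry.of_dist_eq <| by
    rintro ⟨_, a, rfl⟩ ⟨_, b, rfl⟩
    rw [hf₀, hf₀, hf, Subtype.dist_eq]
  refine ⟨Dense.extend hi f₀, (Dense.uniformContinuous_extend hi hiso.uniformContinuous).continuous,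
    fun a => (Dense.extend_of_ind hi hiso.uniformContinuous ⟨i a, mem_range_self a⟩).trans (hf₀ a)⟩

theorem DenseRange.continuousLinearMap_ext {Z E F : Type*} [TopologicalSpace E]
    [AddCommMonoid E] [Module ℂ E] [TopologicalSpace F] [T2Space F] [AddCommMonoid F]
    [Module ℂ F] {ι : Z → E} (hι : DenseRange ι) {T S : E →L[ℂ] F}
    (h : ∀ a, T (ι a) = S (ι a)) : T = S :=
  DFunLike.coe_injective <| hι.equalizer T.continuous S.continuous <| funext h

section InnerProductSpace

variable {Z H : Type*} [NormedAddCommGroup H] [InnerProductSpace ℂ H] {ι : Z → H}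

theorem DenseRange.ext_inner_left (hι : DenseRange ι) {v w : H}
    (h : ∀ a, ⟪ι a, v⟫_ℂ = ⟪ι a, w⟫_ℂ) : v = w :=
  _root_.ext_inner_left ℂ fun x => hι.induction_on x (isClosed_eq (by fun_prop) (by fun_prop)) h

theorem DenseRange.norm_le_of_norm_inner_le (hι : DenseRange ι) {v : H} {C : ℝ} (hC : 0 ≤ C)
    (h : ∀ a, ‖⟪ι a, v⟫_ℂ‖ ≤ C * ‖ι a‖) : ‖v‖ ≤ C := by
  have hall : ∀ x : H, ‖⟪x, v⟫_ℂ‖ ≤ C * ‖x‖ := fun x =>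
    hι.induction_on x (isClosed_le (by fun_prop) (by fun_prop)) h
  rw [← innerSL_apply_norm ℂ v]
  exact (innerSL ℂ v).opNorm_le_bound hC fun x => by
    rw [innerSL_apply_apply, norm_inner_symm]
    exact hall x

end InnerProductSpace

section TracialAlgebra

variable {A H : Type*} [Ring A] [Module ℂ A] [NormedAddCommGroup H] [InnerProductSpace ℂ H]
  {ι : A →ₗ[ℂ] H} {Lmul Rmul : A → H →L[ℂ] H}

theorem Lmul_mul (hdense : DenseRange ι) (hLmul : ∀ a b : A, Lmul a (ι b) = ι (a * b))
    (a b : A) : Lmul (a * b) = Lmul a * Lmul b :=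
  hdense.continuousLinearMap_ext fun c => by
    rw [mul_apply_eq_comp, hLmul, hLmul, hLmul, mul_assoc]

theorem Rmul_mul (hdense : DenseRange ι) (hRmul : ∀ a b : A, Rmul a (ι b) = ι (b * a))
    (a b : A) : Rmul (a * b) = Rmul b * Rmul a :=
  hdense.continuousLinearMap_ext fun c => by
    rw [mul_apply_eq_comp, hRmul, hRmul, hRmul, mul_assoc]

theorem commute_Lmul_Rmul (hdense : DenseRange ι) (hLmul : ∀ a b : A, Lmul a (ι b) = ι (a * b))
    (hRmul : ∀ a b : A, Rmul a (ι b) = ι (b * a)) (a b : A) : Commute (Lmul a) (Rmul b) :=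
  hdense.continuousLinearMap_ext fun c => by
    rw [mul_apply_eq_comp, mul_apply_eq_comp, hLmul, hRmul, hRmul, hLmul, mul_assoc]

theorem apply_eq_Lmul_of_mem_centralizer (hLmul : ∀ a b : A, Lmul a (ι b) = ι (a * b))
    {S : H →L[ℂ] H} (hS : S ∈ centralizer (range Lmul)) (a : A) :
    S (ι a) = Lmul a (S (ι 1)) := by
  rw [← mul_apply_eq_comp, hS (Lmul a) ⟨a, rfl⟩, mul_apply_eq_comp, hLmul, mul_one]

theorem apply_eq_Rmul_of_mem_centralizer (hRmul : ∀ a b : A, Rmul a (ι b) = ι (b * a))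
    {T : H →L[ℂ] H} (hT : T ∈ centralizer (range Rmul)) (a : A) :
    T (ι a) = Rmul a (T (ι 1)) := by
  rw [← mul_apply_eq_comp, hT (Rmul a) ⟨a, rfl⟩, mul_apply_eq_comp, hRmul, one_mul]

variable [StarRing A] {τ : A →ₗ[ℂ] ℂ}

theorem norm_sq_eq_re_trace (hinner : ∀ a b : A, ⟪ι a, ι b⟫_ℂ = τ (star a * b)) (a : A) :
    ‖ι a‖ ^ 2 = (τ (star a * a)).re := by
  rw [← hinner, ← inner_self_eq_norm_sq (𝕜 := ℂ)]
  rfl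

theorem norm_map_star (hτtr : ∀ a b : A, τ (a * b) = τ (b * a))
    (hinner : ∀ a b : A, ⟪ι a, ι b⟫_ℂ = τ (star a * b)) (a : A) :
    ‖ι (star a)‖ = ‖ι a‖ := by
  rw [← sq_eq_sq₀ (norm_nonneg _) (norm_nonneg _), norm_sq_eq_re_trace hinner,
    norm_sq_eq_re_trace hinner, star_star, hτtr]

theorem exists_continuous_map_star [CompleteSpace H] (hτtr : ∀ a b : A, τ (a * b) = τ (b * a))
    (hdense : DenseRange ι) (hinner : ∀ a b : A, ⟪ι a, ι b⟫_ℂ = τ (star a * b)) :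
    ∃ J : H → H, Continuous J ∧ ∀ a, J (ι a) = ι (star a) :=
  hdense.exists_continuous_extend_of_dist_eq fun a b => by
    rw [dist_eq_norm, dist_eq_norm, ← map_sub, ← map_sub, ← star_sub, norm_map_star hτtr hinner]

theorem inner_Lmul_left (hdense : DenseRange ι)
    (hinner : ∀ a b : A, ⟪ι a, ι b⟫_ℂ = τ (star a * b))
    (hLmul : ∀ a b : A, Lmul a (ι b) = ι (a * b)) (a : A) (x y : H) :
    ⟪Lmul a x, y⟫_ℂ = ⟪x, Lmul (star a) y⟫_ℂ := by
  refine hdense.induction_on₂ (p := fun x y => ⟪Lmul a x, y⟫_ℂ = ⟪x, Lmul (star a) y⟫_ℂ)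
    (isClosed_eq (by fun_prop) (by fun_prop)) (fun b c => ?_) x y
  rw [hLmul, hLmul, hinner, hinner, star_mul, mul_assoc]

theorem inner_Lmul_right (hdense : DenseRange ι)
    (hinner : ∀ a b : A, ⟪ι a, ι b⟫_ℂ = τ (star a * b))
    (hLmul : ∀ a b : A, Lmul a (ι b) = ι (a * b)) (a : A) (x y : H) :
    ⟪x, Lmul a y⟫_ℂ = ⟪Lmul (star a) x, y⟫_ℂ := by
  rw [inner_Lmul_left hdense hinner hLmul, star_star]

theorem inner_Rmul_right (hτtr : ∀ a b : A, τ (a * b) = τ (b * a)) (hdense : DenseRange ι)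
    (hinner : ∀ a b : A, ⟪ι a, ι b⟫_ℂ = τ (star a * b))
    (hRmul : ∀ a b : A, Rmul a (ι b) = ι (b * a)) (a : A) (x y : H) :
    ⟪x, Rmul a y⟫_ℂ = ⟪Rmul (star a) x, y⟫_ℂ := by
  refine hdense.induction_on₂ (p := fun x y => ⟪x, Rmul a y⟫_ℂ = ⟪Rmul (star a) x, y⟫_ℂ)
    (isClosed_eq (by fun_prop) (by fun_prop)) (fun b c => ?_) x y
  rw [hRmul, hRmul, hinner, hinner, star_mul, star_star, ← mul_assoc, hτtr, mul_assoc]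

theorem norm_Rmul_apply_le_of_mem_centralizer (hτtr : ∀ a b : A, τ (a * b) = τ (b * a))
    (hdense : DenseRange ι) (hinner : ∀ a b : A, ⟪ι a, ι b⟫_ℂ = τ (star a * b))
    (hLmul : ∀ a b : A, Lmul a (ι b) = ι (a * b)) (hRmul : ∀ a b : A, Rmul a (ι b) = ι (b * a))
    {S : H →L[ℂ] H} (hS : S ∈ centralizer (range Lmul)) (a : A) :
    ‖Rmul a (S (ι 1))‖ ≤ ‖S‖ * ‖ι a‖ := by
  refine hdense.norm_le_of_norm_inner_le (by positivity) fun b => ?_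
  have key : ⟪ι b, Rmul a (S (ι 1))⟫_ℂ = ⟪ι (star a), S (ι (star b))⟫_ℂ := by
    rw [inner_Rmul_right hτtr hdense hinner hRmul, hRmul, ← hLmul b,
      inner_Lmul_left hdense hinner hLmul, ← apply_eq_Lmul_of_mem_centralizer hLmul hS]
  calc ‖⟪ι b, Rmul a (S (ι 1))⟫_ℂ‖ ≤ ‖ι (star a)‖ * (‖S‖ * ‖ι (star b)‖) := by
        rw [key]
        exact (norm_inner_le_norm _ _).trans (by gcongr; exact S.le_opNorm _)
    _ = ‖S‖ * ‖ι a‖ * ‖ι b‖ := by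
        rw [norm_map_star hτtr hinner, norm_map_star hτtr hinner]
        ring

theorem inner_apply_eq_of_mem_centralizer_Rmul (hτtr : ∀ a b : A, τ (a * b) = τ (b * a))
    (hdense : DenseRange ι) (hinner : ∀ a b : A, ⟪ι a, ι b⟫_ℂ = τ (star a * b))
    (hLmul : ∀ a b : A, Lmul a (ι b) = ι (a * b)) (hRmul : ∀ a b : A, Rmul a (ι b) = ι (b * a))
    {J : H → H} (hJc : Continuous J) (hJ : ∀ a, J (ι a) = ι (star a))
    {T : H →L[ℂ] H} (hT : T ∈ centralizer (range Rmul)) (d : A) (y : H) :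
    ⟪ι d, T y⟫_ℂ = ⟪Lmul d (J y), T (ι 1)⟫_ℂ := by
  refine hdense.induction_on y (isClosed_eq (by fun_prop) (by fun_prop)) fun b => ?_
  rw [apply_eq_Rmul_of_mem_centralizer hRmul hT, inner_Rmul_right hτtr hdense hinner hRmul, hRmul,
    hJ, hLmul]

theorem inner_apply_eq_of_mem_centralizer_Lmul
    (hdense : DenseRange ι) (hinner : ∀ a b : A, ⟪ι a, ι b⟫_ℂ = τ (star a * b))
    (hLmul : ∀ a b : A, Lmul a (ι b) = ι (a * b)) (hRmul : ∀ a b : A, Rmul a (ι b) = ι (b * a))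
    {J : H → H} (hJc : Continuous J) (hJ : ∀ a, J (ι a) = ι (star a))
    {S : H →L[ℂ] H} (hS : S ∈ centralizer (range Lmul)) (d : A) (y : H) :
    ⟪ι d, S y⟫_ℂ = ⟪Rmul d (J y), S (ι 1)⟫_ℂ := by
  refine hdense.induction_on y (isClosed_eq (by fun_prop) (by fun_prop)) fun b => ?_
  rw [apply_eq_Lmul_of_mem_centralizer hLmul hS, inner_Lmul_right hdense hinner hLmul, hLmul,
    hJ, hRmul]

theorem inner_Lmul_conj_Lmul_eq (hτtr : ∀ a b : A, τ (a * b) = τ (b * a))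
    (hdense : DenseRange ι) (hinner : ∀ a b : A, ⟪ι a, ι b⟫_ℂ = τ (star a * b))
    (hLmul : ∀ a b : A, Lmul a (ι b) = ι (a * b)) (hRmul : ∀ a b : A, Rmul a (ι b) = ι (b * a))
    {J : H → H} (hJc : Continuous J) (hJ : ∀ a, J (ι a) = ι (star a))
    (a d : A) (x y : H) :
    ⟪Lmul d (J (Lmul a y)), x⟫_ℂ = ⟪Rmul d (J (Rmul a x)), y⟫_ℂ := by
  refine hdense.induction_on₂
    (p := fun x y => ⟪Lmul d (J (Lmul a y)), x⟫_ℂ = ⟪Rmul d (J (Rmul a x)), y⟫_ℂ)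
    (isClosed_eq (by fun_prop) (by fun_prop)) (fun c b => ?_) x y
  rw [hLmul, hJ, hLmul, hRmul, hJ, hRmul, hinner, hinner]
  simp only [star_mul, star_star, mul_assoc]
  rw [← mul_assoc a, hτtr, mul_assoc]

theorem commute_of_mem_centralizer [CompleteSpace H] (hτtr : ∀ a b : A, τ (a * b) = τ (b * a))
    (hdense : DenseRange ι) (hinner : ∀ a b : A, ⟪ι a, ι b⟫_ℂ = τ (star a * b))
    (hLmul : ∀ a b : A, Lmul a (ι b) = ι (a * b)) (hRmul : ∀ a b : A, Rmul a (ι b) = ι (b * a))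
    {T S : H →L[ℂ] H} (hT : T ∈ centralizer (range Rmul)) (hS : S ∈ centralizer (range Lmul)) :
    Commute T S := by
  obtain ⟨J, hJc, hJ⟩ := exists_continuous_map_star hτtr hdense hinner
  refine hdense.continuousLinearMap_ext fun a => hdense.ext_inner_left fun d => ?_
  calc ⟪ι d, (T * S) (ι a)⟫_ℂ = ⟪Lmul d (J (Lmul a (S (ι 1)))), T (ι 1)⟫_ℂ := by
        rw [mul_apply_eq_comp, apply_eq_Lmul_of_mem_centralizer hLmul hS a,
          inner_apply_eq_of_mem_centralizer_Rmul hτtr hdense hinner hLmul hRmul hJc hJ hT]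
    _ = ⟪Rmul d (J (Rmul a (T (ι 1)))), S (ι 1)⟫_ℂ :=
        inner_Lmul_conj_Lmul_eq hτtr hdense hinner hLmul hRmul hJc hJ a d _ _
    _ = ⟪ι d, (S * T) (ι a)⟫_ℂ := by
        rw [mul_apply_eq_comp, apply_eq_Rmul_of_mem_centralizer hRmul hT a,
          inner_apply_eq_of_mem_centralizer_Lmul hdense hinner hLmul hRmul hJc hJ hS]

theorem centralizer_centralizer_range_Lmul [CompleteSpace H]
    (hτtr : ∀ a b : A, τ (a * b) = τ (b * a))
    (hdense : DenseRange ι) (hinner : ∀ a b : A, ⟪ι a, ι b⟫_ℂ = τ (star a * b))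
    (hLmul : ∀ a b : A, Lmul a (ι b) = ι (a * b)) (hRmul : ∀ a b : A, Rmul a (ι b) = ι (b * a)) :
    centralizer (centralizer (range Lmul)) = centralizer (range Rmul) := by
  refine (centralizer_subset ?_).antisymm fun T hT S hS => ?_
  · rintro _ ⟨b, rfl⟩ _ ⟨a, rfl⟩
    exact commute_Lmul_Rmul hdense hLmul hRmul a b
  · exact (commute_of_mem_centralizer hτtr hdense hinner hLmul hRmul hT hS).eq.symm

theorem centralizer_centralizer_range_Rmul [CompleteSpace H]
    (hτtr : ∀ a b : A, τ (a * b) = τ (b * a))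
    (hdense : DenseRange ι) (hinner : ∀ a b : A, ⟪ι a, ι b⟫_ℂ = τ (star a * b))
    (hLmul : ∀ a b : A, Lmul a (ι b) = ι (a * b)) (hRmul : ∀ a b : A, Rmul a (ι b) = ι (b * a)) :
    centralizer (centralizer (range Rmul)) = centralizer (range Lmul) := by
  refine (centralizer_subset ?_).antisymm fun S hS T hT => ?_
  · rintro _ ⟨a, rfl⟩ _ ⟨b, rfl⟩
    exact (commute_Lmul_Rmul hdense hLmul hRmul a b).eq.symm
  · exact commute_of_mem_centralizer hτtr hdense hinner hLmul hRmul hT hS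

end TracialAlgebra

section Linfty

variable {A H : Type*} [NormedRing A] [StarRing A] [NormedAlgebra ℂ A]
  [NormedAddCommGroup H] [InnerProductSpace ℂ H]
  {τ : A →ₗ[ℂ] ℂ} {ι : A →ₗ[ℂ] H} {Lmul Rmul : A → H →L[ℂ] H}

theorem memLinfty_of_norm_Rmul_le (hinner : ∀ a b : A, ⟪ι a, ι b⟫_ℂ = τ (star a * b)) {ξ : H}
    {C : ℝ} (hC : 0 ≤ C) (h : ∀ a, ‖Rmul a ξ‖ ≤ C * ‖ι a‖) : MemLinfty τ Rmul ξ := by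
  refine ⟨C, ?_⟩
  rintro _ ⟨a, ha, rfl⟩
  have hιa : ‖ι a‖ ≤ 1 := by
    rwa [← sq_le_one_iff₀ (norm_nonneg _), norm_sq_eq_re_trace hinner]
  exact (h a).trans (mul_le_of_le_one_right hC hιa)

theorem setOf_memLinfty_eq_centralizer_range_Rmul (hdense : DenseRange ι)
    (hinner : ∀ a b : A, ⟪ι a, ι b⟫_ℂ = τ (star a * b))
    (hRmul : ∀ a b : A, Rmul a (ι b) = ι (b * a)) :
    {T : H →L[ℂ] H | ∃ ξ : H, MemLinfty τ Rmul ξ ∧ ∀ a : A, T (ι a) = Rmul a ξ} =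
      centralizer (range Rmul) := by
  refine Subset.antisymm ?_ fun T hT => ?_
  · rintro T ⟨ξ, -, hξ⟩ _ ⟨b, rfl⟩
    refine hdense.continuousLinearMap_ext fun c => ?_
    rw [mul_apply_eq_comp, mul_apply_eq_comp, hξ, hRmul, hξ, Rmul_mul hdense hRmul,
      mul_apply_eq_comp]
  · refine ⟨T (ι 1), memLinfty_of_norm_Rmul_le hinner (norm_nonneg T) fun a => ?_,
      apply_eq_Rmul_of_mem_centralizer hRmul hT⟩
    rw [← apply_eq_Rmul_of_mem_centralizer hRmul hT]
    exact T.le_opNorm _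

theorem setOf_memLinfty_eq_centralizer_range_Lmul (hτtr : ∀ a b : A, τ (a * b) = τ (b * a))
    (hdense : DenseRange ι) (hinner : ∀ a b : A, ⟪ι a, ι b⟫_ℂ = τ (star a * b))
    (hLmul : ∀ a b : A, Lmul a (ι b) = ι (a * b)) (hRmul : ∀ a b : A, Rmul a (ι b) = ι (b * a)) :
    {S : H →L[ℂ] H | ∃ η : H, MemLinfty τ Rmul η ∧ ∀ a : A, S (ι a) = Lmul a η} =
      centralizer (range Lmul) := by
  refine Subset.antisymm ?_ fun S hS => ?_
  · rintro S ⟨η, -, hη⟩ _ ⟨b, rfl⟩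
    refine hdense.continuousLinearMap_ext fun c => ?_
    rw [mul_apply_eq_comp, mul_apply_eq_comp, hη, hLmul, hη, Lmul_mul hdense hLmul,
      mul_apply_eq_comp]
  · exact ⟨S (ι 1), memLinfty_of_norm_Rmul_le hinner (norm_nonneg S)
      (norm_Rmul_apply_le_of_mem_centralizer hτtr hdense hinner hLmul hRmul hS),
      apply_eq_Lmul_of_mem_centralizer hLmul hS⟩

end Linfty

theorem statement1_general
    {A H : Type*} [NormedRing A] [StarRing A] [NormedAlgebra ℂ A]
    [NormedAddCommGroup H] [InnerProductSpace ℂ H] [CompleteSpace H]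
    (τ : A →ₗ[ℂ] ℂ)
    (hτtr : ∀ a b : A, τ (a * b) = τ (b * a))
    (ι : A →ₗ[ℂ] H) (hdense : DenseRange ι)
    (hinner : ∀ a b : A, (inner ℂ (ι a) (ι b) : ℂ) = τ (star a * b))
    (Lmul Rmul : A → H →L[ℂ] H)
    (hLmul : ∀ a b : A, Lmul a (ι b) = ι (a * b))
    (hRmul : ∀ a b : A, Rmul a (ι b) = ι (b * a))
    (Lset Rset : Set (H →L[ℂ] H))
    (hLset : Lset = {T : H →L[ℂ] H | ∃ ξ : H, MemLinfty τ Rmul ξ ∧ ∀ a : A, T (ι a) = Rmul a ξ})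
    (hRset : Rset = {T : H →L[ℂ] H | ∃ ξ : H, MemLinfty τ Rmul ξ ∧ ∀ a : A, T (ι a) = Lmul a ξ}) :
    Set.centralizer (Set.centralizer (Set.range Lmul)) = Lset ∧
    Lset = Set.centralizer Rset ∧
    Set.centralizer (Set.centralizer (Set.range Rmul)) = Rset ∧
    Rset = Set.centralizer Lset ∧
    Set.centralizer (Set.centralizer Lset) = Lset ∧
    Set.centralizer (Set.centralizer Rset) = Rset := by
  have hL : Lset = centralizer (range Rmul) :=
    hLset.trans (setOf_memLinfty_eq_centralizer_range_Rmul hdense hinner hRmul)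
  have hR : Rset = centralizer (range Lmul) :=
    hRset.trans (setOf_memLinfty_eq_centralizer_range_Lmul hτtr hdense hinner hLmul hRmul)
  have hLL := centralizer_centralizer_range_Lmul hτtr hdense hinner hLmul hRmul
  have hRR := centralizer_centralizer_range_Rmul hτtr hdense hinner hLmul hRmul
  subst hL hR
  exact ⟨hLL, hLL.symm, hRR, hRR.symm, centralizer_centralizer_centralizer _,
    centralizer_centralizer_centralizer _⟩

/-- The bicommutant identities
`{L_a : a ∈ A}″ = {L_ξ : ξ ∈ L^∞(τ)} = {R_ξ : ξ ∈ L^∞(τ)}′` and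
`{R_a : a ∈ A}″ = {R_ξ : ξ ∈ L^∞(τ)} = {L_ξ : ξ ∈ L^∞(τ)}′` hold in `B(L²(τ))`; in particular
both `{L_ξ}` and `{R_ξ}` are equal to their own bicommutants.  Commutants are taken with respect
to composition of continuous linear maps (the multiplication of the ring `H →L[ℂ] H`), i.e. via
`Set.centralizer`.  Here `L_ξ` is the bounded operator determined by `L_ξ(ι a) = ξ·a = Rmul a ξ`
and `R_ξ` the one determined by `R_ξ(ι a) = a·ξ = Lmul a ξ`. -/
theorem statement1
    {A H : Type*} [NormedRing A] [StarRing A] [CStarRing A] [NormedAlgebra ℂ A]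
    [StarModule ℂ A] [CompleteSpace A]
    [NormedAddCommGroup H] [InnerProductSpace ℂ H] [CompleteSpace H]
    (τ : A →ₗ[ℂ] ℂ)
    (hτpos : ∀ a : A, 0 ≤ (τ (star a * a)).re ∧ (τ (star a * a)).im = 0)
    (hτone : τ 1 = 1)
    (hτtr : ∀ a b : A, τ (a * b) = τ (b * a))
    (ι : A →ₗ[ℂ] H) (hdense : DenseRange ι)
    (hinner : ∀ a b : A, (inner ℂ (ι a) (ι b) : ℂ) = τ (star a * b))
    (Lmul Rmul : A → H →L[ℂ] H)
    (hLmul : ∀ a b : A, Lmul a (ι b) = ι (a * b))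
    (hRmul : ∀ a b : A, Rmul a (ι b) = ι (b * a))
    (Lset Rset : Set (H →L[ℂ] H))
    (hLset : Lset = {T : H →L[ℂ] H | ∃ ξ : H, MemLinfty τ Rmul ξ ∧ ∀ a : A, T (ι a) = Rmul a ξ})
    (hRset : Rset = {T : H →L[ℂ] H | ∃ ξ : H, MemLinfty τ Rmul ξ ∧ ∀ a : A, T (ι a) = Lmul a ξ}) :
    Set.centralizer (Set.centralizer (Set.range Lmul)) = Lset ∧
    Lset = Set.centralizer Rset ∧
    Set.centralizer (Set.centralizer (Set.range Rmul)) = Rset ∧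
    Rset = Set.centralizer Lset ∧
    Set.centralizer (Set.centralizer Lset) = Lset ∧
    Set.centralizer (Set.centralizer Rset) = Rset :=
  statement1_general τ hτtr ι hdense hinner Lmul Rmul hLmul hRmul Lset Rset hLset hRset
end

section
/- For every z ∈ ℂ with Im z > 0, the function G satisfies the complex Burgers equation ∂_t G(t, z) + G(t, z)·∂_z G(t, z) = 0 for all t > 0, where ∂_t denotes the derivative with respect to the real variable t and ∂_z the complex derivative with respect to z; moreover G(t, z) → 1/z as t → 0⁺. -/
open MeasureTheory Filter

/-- The semicircular distribution of variance `t` (radius `2√t`): the measure on `ℝ` with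
density `x ↦ (2πt)⁻¹ √(max (4t − x²) 0)` with respect to Lebesgue measure. -/
noncomputable def semicircle (t : ℝ) : Measure ℝ :=
  volume.withDensity
    (fun x => ENNReal.ofReal ((2 * Real.pi * t)⁻¹ * Real.sqrt (max (4 * t - x ^ 2) 0)))

/-- The branch `√(z² − 4t) := z·(1 − 4t/z²)^{1/2}` (principal branch of the complex square
root), suited to `Im z > 0`. -/
noncomputable def sqrtShifted (t : ℝ) (z : ℂ) : ℂ :=
  z * (1 - 4 * (t : ℂ) / z ^ 2) ^ ((1 : ℂ) / 2)

/-- `G(t, z) := (z − √(z² − 4t))/(2t)`. -/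
noncomputable def G (t : ℝ) (z : ℂ) : ℂ :=
  (z - sqrtShifted t z) / (2 * (t : ℂ))

/-! The branch `S = sqrtShifted t z` satisfies `S ^ 2 = z ^ 2 - 4 t`, so implicit differentiation
gives `∂_t S = -2 / S` and `∂_z S = z / S`, while rationalising gives `G (z + S) = 2`. Hence
`∂_t G + G ∂_z G = (2 - G (z + S)) / (2 t S) = 0`, and `G = 2 / (z + S) → 2 / (2 z)` as `t → 0⁺`
because `S → z`. -/

open Complex Topology

theorem DifferentiableAt.hasDerivAt_of_sq_eventuallyEq {𝕜 𝔸 : Type*} [NontriviallyNormedField 𝕜]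
    [NormedField 𝔸] [NormedAlgebra 𝕜 𝔸] [CharZero 𝔸] {f g : 𝕜 → 𝔸} {g' : 𝔸} {x : 𝕜}
    (hf : DifferentiableAt 𝕜 f x) (hg : HasDerivAt g g' x)
    (hfg : (fun y => f y ^ 2) =ᶠ[𝓝 x] g) (hx : f x ≠ 0) :
    HasDerivAt f (g' / (2 * f x)) x := by
  have hsq : HasDerivAt g (2 * f x * _root_.deriv f x) x := by
    simpa using (hf.hasDerivAt.fun_pow 2).congr_of_eventuallyEq hfg.symm
  rw [hg.unique hsq, mul_div_cancel_left₀ _ (mul_ne_zero two_ne_zero hx)]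
  exact hf.hasDerivAt

theorem Complex.one_sub_four_mul_div_sq_mem_slitPlane {t : ℝ} (ht : 0 < t) {z : ℂ}
    (hz : z.im ≠ 0) : 1 - 4 * (t : ℂ) / z ^ 2 ∈ slitPlane := by
  rw [mem_slitPlane_iff]
  rcases eq_or_ne z.re 0 with hre | hre
  · left
    have hz2 : z ^ 2 = -((z.im ^ 2 : ℝ) : ℂ) := by
      apply Complex.ext <;> simp [sq, hre]
    have : 0 < z.im ^ 2 := by positivity
    rw [hz2, div_neg, sub_neg_eq_add, ← ofReal_ofNat, ← ofReal_mul, ← ofReal_div, add_re, one_re,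
      ofReal_re]
    positivity
  · right
    have hz0 : z ≠ 0 := ne_of_apply_ne im hz
    simp [div_im, sq, ht.ne', mul_comm z.im, hre, hz, hz0]

lemma sqrtShifted_sq (t : ℝ) {z : ℂ} (hz : z ≠ 0) : sqrtShifted t z ^ 2 = z ^ 2 - 4 * t := by
  rw [sqrtShifted, mul_pow, one_div, cpow_ofNat_inv_pow]
  field_simp

lemma tendsto_sqrtShifted_zero (z : ℂ) :
    Tendsto (fun t : ℝ => sqrtShifted t z) (𝓝 0) (𝓝 z) := by
  have h1 : (1 - 4 * ((0 : ℝ) : ℂ) / z ^ 2) ∈ slitPlane := by simp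
  have hcont : ContinuousAt (fun t : ℝ => sqrtShifted t z) 0 := by
    unfold sqrtShifted
    fun_prop (disch := assumption)
  simpa [sqrtShifted] using hcont.tendsto

variable {t : ℝ} {z : ℂ}

lemma sqrtShifted_ne_zero (ht : 0 < t) (hz : z.im ≠ 0) : sqrtShifted t z ≠ 0 := by
  refine mul_ne_zero (ne_of_apply_ne im hz) ?_
  rw [Ne, cpow_eq_zero_iff]
  exact fun h => slitPlane_ne_zero (one_sub_four_mul_div_sq_mem_slitPlane ht hz) h.1

lemma G_mul_add_sqrtShifted (ht : t ≠ 0) (hz : z ≠ 0) : G t z * (z + sqrtShifted t z) = 2 := by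
  have ht' : (t : ℂ) ≠ 0 := by exact_mod_cast ht
  rw [G, div_mul_eq_mul_div, div_eq_iff (by simpa using ht')]
  linear_combination -sqrtShifted_sq t hz

lemma hasDerivAt_sqrtShifted_time (ht : 0 < t) (hz : z.im ≠ 0) :
    HasDerivAt (fun s : ℝ => sqrtShifted s z) (-2 / sqrtShifted t z) t := by
  have hz0 : z ≠ 0 := ne_of_apply_ne im hz
  have hslit := one_sub_four_mul_div_sq_mem_slitPlane ht hz
  have hdiff : DifferentiableAt ℂ (fun u : ℂ => z * (1 - 4 * u / z ^ 2) ^ ((1 : ℂ) / 2)) t := by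
    fun_prop (disch := assumption)
  have hdiff' : DifferentiableAt ℝ (fun s : ℝ => sqrtShifted s z) t :=
    hdiff.hasDerivAt.comp_ofReal.differentiableAt
  have hsq : HasDerivAt (fun s : ℝ => z ^ 2 - 4 * (s : ℂ)) (-4) t := by
    simpa using ((hasDerivAt_id (t : ℂ)).const_mul 4).const_sub (z ^ 2) |>.comp_ofReal
  refine (hdiff'.hasDerivAt_of_sq_eventuallyEq hsq (.of_forall fun s => sqrtShifted_sq s hz0)
    (sqrtShifted_ne_zero ht hz)).congr_deriv ?_
  ring

lemma hasDerivAt_sqrtShifted_space (ht : 0 < t) (hz : z.im ≠ 0) :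
    HasDerivAt (sqrtShifted t) (z / sqrtShifted t z) z := by
  have hz0 : z ≠ 0 := ne_of_apply_ne im hz
  have hz2 : z ^ 2 ≠ 0 := pow_ne_zero 2 hz0
  have hslit := one_sub_four_mul_div_sq_mem_slitPlane ht hz
  have hdiff : DifferentiableAt ℂ (sqrtShifted t) z := by
    unfold sqrtShifted
    fun_prop (disch := assumption)
  have hsq : HasDerivAt (fun w : ℂ => w ^ 2 - 4 * t) (2 * z) z := by
    simpa using (hasDerivAt_pow 2 z).sub_const (4 * (t : ℂ))
  have hnhds : ∀ᶠ w in 𝓝 z, w ≠ 0 := isOpen_ne.mem_nhds hz0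
  refine (hdiff.hasDerivAt_of_sq_eventuallyEq hsq (hnhds.mono fun w hw => sqrtShifted_sq t hw)
    (sqrtShifted_ne_zero ht hz)).congr_deriv ?_
  ring

lemma hasDerivAt_G_time (ht : 0 < t) (hz : z.im ≠ 0) :
    HasDerivAt (fun s : ℝ => G s z) ((1 / sqrtShifted t z - G t z) / t) t := by
  have ht' : (t : ℂ) ≠ 0 := by exact_mod_cast ht.ne'
  have hden : HasDerivAt (fun s : ℝ => 2 * (s : ℂ)) 2 t := by
    simpa using ((hasDerivAt_id t).ofReal_comp).const_mul (2 : ℂ)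
  refine (((hasDerivAt_const (t : ℝ) z).sub (hasDerivAt_sqrtShifted_time ht hz)).div hden
    (by simpa using ht')).congr_deriv ?_
  have hS := sqrtShifted_ne_zero ht hz
  rw [G, Pi.sub_apply]
  field_simp
  ring

lemma hasDerivAt_G_space (ht : 0 < t) (hz : z.im ≠ 0) :
    HasDerivAt (G t) ((1 - z / sqrtShifted t z) / (2 * t)) z :=
  ((hasDerivAt_id z).sub (hasDerivAt_sqrtShifted_space ht hz)).div_const _

lemma G_time_add_G_mul_G_space (ht : 0 < t) (hz : z.im ≠ 0) :
    (1 / sqrtShifted t z - G t z) / t + G t z * ((1 - z / sqrtShifted t z) / (2 * t)) = 0 := by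
  have ht' : (t : ℂ) ≠ 0 := by exact_mod_cast ht.ne'
  have hS := sqrtShifted_ne_zero ht hz
  have key := G_mul_add_sqrtShifted ht.ne' (ne_of_apply_ne im hz)
  field_simp
  linear_combination -key

lemma tendsto_G_nhdsGT_zero (hz : z ≠ 0) : Tendsto (fun t : ℝ => G t z) (𝓝[>] 0) (𝓝 (1 / z)) := by
  have hG : ∀ t ∈ Set.Ioi (0 : ℝ), 2 / (z + sqrtShifted t z) = G t z := fun t ht =>
    have key := G_mul_add_sqrtShifted (ne_of_gt ht) hz
    div_eq_of_eq_mul (right_ne_zero_of_mul (key ▸ two_ne_zero)) key.symm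
  have hlim : Tendsto (fun t : ℝ => 2 / (z + sqrtShifted t z)) (𝓝 0) (𝓝 (2 / (z + z))) :=
    tendsto_const_nhds.div (tendsto_const_nhds.add (tendsto_sqrtShifted_zero z))
      (by simpa [← two_mul] using hz)
  rw [show (2 : ℂ) / (z + z) = 1 / z by field_simp; ring] at hlim
  exact (hlim.mono_left nhdsWithin_le_nhds).congr' (eventually_nhdsWithin_of_forall hG)

/-- For every `z ∈ ℂ` with `Im z > 0`, the function `G` satisfies the complex
(inviscid) Burgers equation `∂_t G(t, z) + G(t, z)·∂_z G(t, z) = 0` for all `t > 0` (where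
`∂_t` is the derivative in the real variable `t` and `∂_z` the complex derivative in `z`),
and `G(t, z) → 1/z` as `t → 0⁺`. -/
theorem statement18 (z : ℂ) (hz : 0 < z.im) :
    (∀ t : ℝ, 0 < t →
      ∃ Gt Gz : ℂ,
        HasDerivAt (fun s : ℝ => G s z) Gt t ∧
        HasDerivAt (fun w : ℂ => G t w) Gz z ∧
        Gt + G t z * Gz = 0) ∧
    Tendsto (fun t : ℝ => G t z) (nhdsWithin 0 (Set.Ioi 0)) (nhds (1 / z)) :=
  ⟨fun _ ht => ⟨_, _, hasDerivAt_G_time ht hz.ne', hasDerivAt_G_space ht hz.ne',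
    G_time_add_G_mul_G_space ht hz.ne'⟩, tendsto_G_nhdsGT_zero (ne_of_apply_ne im hz.ne')⟩
end
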